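/- Let d ≥ 3 and let Δ be a pure d-dimensional flag-no-square simplicial complex in which every (d−1)-dimensional face is contained in at least two facets (no free (d−1)-faces). Then the number of vertices satisfies f_0(Δ) > (25/12)^{2^{d−3}}. -/

import Mathlib

open Finset

variable {V : Type} [DecidableEq V] [Fintype V]

/-- `K` is (the set of faces of) an abstract simplicial complex on `V`:
nonempty (contains the empty face) and closed under taking subsets. -/
def IsComplex (K : Finset (Finset V)) : Prop :=
  ∅ ∈ K ∧ ∀ σ ∈ K, ∀ τ ⊆ σ, τ ∈ K

/-- The facets (maximal faces) of `K`. -/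
def facets (K : Finset (Finset V)) : Finset (Finset V) :=
  K.filter fun σ => ∀ τ ∈ K, σ ⊆ τ → τ = σ

/-- `K` is pure `d`-dimensional: every facet has `d + 1` vertices. -/
def IsPure (K : Finset (Finset V)) (d : ℕ) : Prop :=
  ∀ σ ∈ facets K, σ.card = d + 1

/-- `fNum K i` is the number of `i`-dimensional faces (faces with `i + 1` vertices). -/
def fNum (K : Finset (Finset V)) (i : ℕ) : ℕ :=
  (K.filter fun σ => σ.card = i + 1).card

/-- `K` is flag: every set of vertices of `K` that are pairwise joined by
edges of `K` is a face of `K`. -/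
def IsFlag (K : Finset (Finset V)) : Prop :=
  ∀ τ : Finset V, (∀ v ∈ τ, ({v} : Finset V) ∈ K) →
    (∀ u ∈ τ, ∀ w ∈ τ, u ≠ w → ({u, w} : Finset V) ∈ K) → τ ∈ K

/-- `K` has no induced 4-cycle: there are no four distinct vertices `a b c d`
with `ab, bc, cd, da` faces and `ac, bd` non-faces. -/
def NoSquare (K : Finset (Finset V)) : Prop :=
  ¬ ∃ a b c d : V, ({a, b, c, d} : Finset V).card = 4 ∧
    ({a, b} : Finset V) ∈ K ∧ ({b, c} : Finset V) ∈ K ∧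
    ({c, d} : Finset V) ∈ K ∧ ({d, a} : Finset V) ∈ K ∧
    ({a, c} : Finset V) ∉ K ∧ ({b, d} : Finset V) ∉ K

/-- Every face with `d` vertices (i.e. of dimension `d - 1`) is contained in
at least two facets. -/
def NoFree (K : Finset (Finset V)) (d : ℕ) : Prop :=
  ∀ σ ∈ K, σ.card = d → 2 ≤ ((facets K).filter fun F => σ ⊆ F).card

/-- The link of a face `σ`. -/
def link (K : Finset (Finset V)) (σ : Finset V) : Finset (Finset V) :=
  K.filter fun τ => τ ∩ σ = ∅ ∧ τ ∪ σ ∈ K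

/-!
For a face `σ` with `d + 1 - k` vertices we bound from below, by induction on `k`, both the
number of vertices of its link and the number of facets containing it. Take a link vertex `v`
of `σ`. Each facet `F ⊇ σ ∪ {v}` has, since no ridge is free, a second extension `w` across the
ridge `F \ {v}`; flagness makes `w` non-adjacent to `v`, and the absence of induced squares makes
`w` determine `F`. Hence the link of `σ` contains `v`, the link of `σ ∪ {v}` and one new vertex
for each facet through `σ ∪ {v}`, while double counting vertex–facet incidences bounds the facets
through `σ`. The resulting recursion (`linkBounds`) roughly squares the facet bound at every step.
-/

theorem IsComplex.mem_of_subset {α : Type} {K : Finset (Finset α)} (hK : IsComplex K)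
    {σ τ : Finset α} (hσ : σ ∈ K) (hτσ : τ ⊆ σ) : τ ∈ K :=
  hK.2 σ hσ τ hτσ

theorem IsComplex.pair_mem {α : Type} [DecidableEq α] {K : Finset (Finset α)}
    (hK : IsComplex K) {σ : Finset α} (hσ : σ ∈ K) {x y : α} (hx : x ∈ σ) (hy : y ∈ σ) :
    ({x, y} : Finset α) ∈ K :=
  hK.mem_of_subset hσ (insert_subset hx (singleton_subset_iff.2 hy))

theorem IsFlag.union_mem {α : Type} [DecidableEq α] {K : Finset (Finset α)}
    (hflag : IsFlag K) (hK : IsComplex K) {σ τ : Finset α} (hσ : σ ∈ K) (hτ : τ ∈ K)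
    (hστ : ∀ x ∈ σ, ∀ y ∈ τ, x ≠ y → ({x, y} : Finset α) ∈ K) : σ ∪ τ ∈ K := by
  refine hflag _ (fun v hv => ?_) (fun u hu w hw huw => ?_)
  · rcases mem_union.1 hv with hv | hv
    · exact hK.mem_of_subset hσ (singleton_subset_iff.2 hv)
    · exact hK.mem_of_subset hτ (singleton_subset_iff.2 hv)
  · rcases mem_union.1 hu with hu | hu <;> rcases mem_union.1 hw with hw | hw
    · exact hK.pair_mem hσ hu hw
    · exact hστ u hu w hw huw
    · rw [pair_comm]
      exact hστ w hw u hu huw.symm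
    · exact hK.pair_mem hτ hu hw

section

variable {K : Finset (Finset V)} {d : ℕ}

theorem eq_of_mem_facets_of_subset {F τ : Finset V} (hF : F ∈ facets K) (hτ : τ ∈ K)
    (hFτ : F ⊆ τ) : τ = F :=
  (mem_filter.1 hF).2 τ hτ hFτ

theorem exists_mem_facets_superset {σ : Finset V} (hσ : σ ∈ K) :
    ∃ F ∈ facets K, σ ⊆ F := by
  obtain ⟨F, hF, hFmax⟩ :=
    (K.filter (σ ⊆ ·)).exists_max_image card ⟨σ, mem_filter.2 ⟨hσ, subset_rfl⟩⟩
  obtain ⟨hFK, hσF⟩ := mem_filter.1 hF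
  refine ⟨F, mem_filter.2 ⟨hFK, fun τ hτ hFτ => ?_⟩, hσF⟩
  exact (eq_of_subset_of_card_le hFτ (hFmax τ (mem_filter.2 ⟨hτ, hσF.trans hFτ⟩))).symm

theorem IsPure.card_le (hpure : IsPure K d) {σ : Finset V} (hσ : σ ∈ K) :
    σ.card ≤ d + 1 := by
  obtain ⟨F, hF, hσF⟩ := exists_mem_facets_superset hσ
  exact hpure F hF ▸ card_le_card hσF

theorem exists_second_extension (hK : IsComplex K) (hpure : IsPure K d) (hflag : IsFlag K)
    (hfree : NoFree K d) {F : Finset V} (hF : F ∈ facets K) {v : V} (hv : v ∈ F) :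
    ∃ w ∉ F, ({v, w} : Finset V) ∉ K ∧ insert w (F.erase v) ∈ K := by
  have hFK : F ∈ K := (mem_filter.1 hF).1
  have hRcard : (F.erase v).card = d := by rw [card_erase_of_mem hv, hpure F hF]; rfl
  obtain ⟨G, hG, hGF⟩ := exists_mem_ne (hfree _ (hK.mem_of_subset hFK (erase_subset v F)) hRcard) F
  obtain ⟨hGfacet, hRG⟩ := mem_filter.1 hG
  have hGK : G ∈ K := (mem_filter.1 hGfacet).1
  obtain ⟨w, hwG, hwF⟩ : ∃ w ∈ G, w ∉ F :=
    not_subset.1 fun hGsub => hGF (eq_of_mem_facets_of_subset hGfacet hFK hGsub).symm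
  refine ⟨w, hwF, fun hvw => hwF ?_, hK.mem_of_subset hGK (insert_subset hwG hRG)⟩
  have hwFK : {w} ∪ F ∈ K := by
    refine hflag.union_mem hK (hK.mem_of_subset hGK (singleton_subset_iff.2 hwG)) hFK ?_
    intro x hx y hy hxy
    rw [mem_singleton.1 hx] at hxy ⊢
    rcases eq_or_ne y v with rfl | hyv
    · rwa [pair_comm]
    · exact hK.pair_mem hGK hwG (hRG (mem_erase.2 ⟨hyv, hy⟩))
  rw [← eq_of_mem_facets_of_subset hF hwFK subset_union_right]
  exact mem_union_left F (mem_singleton_self w)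

/-- A non-edge `xy` with `x ∈ F \ F'`, `y ∈ F' \ F` would give the induced square `x v y w`, so
by flagness the two extensions span a face, which is too large unless `F = F'`. -/
theorem eq_of_second_extension (hK : IsComplex K) (hpure : IsPure K d) (hflag : IsFlag K)
    (hns : NoSquare K) {F F' : Finset V} (hF : F ∈ facets K) (hF' : F' ∈ facets K) {v w : V}
    (hvF : v ∈ F) (hvF' : v ∈ F') (hwF : w ∉ F) (hwF' : w ∉ F') (hvw : ({v, w} : Finset V) ∉ K)
    (hG : insert w (F.erase v) ∈ K) (hG' : insert w (F'.erase v) ∈ K) : F = F' := by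
  have hFK : F ∈ K := (mem_filter.1 hF).1
  have hF'K : F' ∈ K := (mem_filter.1 hF').1
  have hcross : ∀ x ∈ F.erase v, ∀ y ∈ F'.erase v, x ≠ y → ({x, y} : Finset V) ∈ K := by
    intro x hx y hy hxy
    by_contra hxyK
    by_cases hyF : y ∈ F
    · exact hxyK (hK.pair_mem hFK (mem_of_mem_erase hx) hyF)
    by_cases hxF' : x ∈ F'
    · exact hxyK (hK.pair_mem hF'K hxF' (mem_of_mem_erase hy))
    have hxF := mem_of_mem_erase hx
    have hyF' := mem_of_mem_erase hy
    refine hns ⟨x, v, y, w, ?_, hK.pair_mem hFK hxF hvF, hK.pair_mem hF'K hvF' hyF',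
      hK.pair_mem hG' (mem_insert_of_mem hy) (mem_insert_self w _),
      hK.pair_mem hG (mem_insert_self w _) (mem_insert_of_mem hx), hxyK, hvw⟩
    have hxw : x ≠ w := by rintro rfl; exact hwF hxF
    have hyw : y ≠ w := by rintro rfl; exact hwF' hyF'
    have hvy : v ≠ y := by rintro rfl; exact hyF hvF
    have hvw' : v ≠ w := by rintro rfl; exact hwF hvF
    simp [card_insert_of_notMem, ne_of_mem_erase hx, hxy, hxw, hyw, hvy, hvw']
  have hGG' : insert w (F.erase v) ∪ insert w (F'.erase v) ∈ K := by
    refine hflag.union_mem hK hG hG' fun x hx y hy hxy => ?_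
    rcases mem_insert.1 hx with rfl | hxR
    · exact hK.pair_mem hG' (mem_insert_self x _) hy
    rcases mem_insert.1 hy with rfl | hyR'
    · exact hK.pair_mem hG (mem_insert_of_mem hxR) (mem_insert_self y _)
    exact hcross x hxR y hyR' hxy
  have hGcard : (insert w (F.erase v)).card = d + 1 := by
    rw [card_insert_of_notMem fun h => hwF (mem_of_mem_erase h), card_erase_of_mem hvF,
      hpure F hF]
    rfl
  have hG'G : insert w (F'.erase v) ⊆ insert w (F.erase v) :=
    union_eq_left.1 (eq_of_subset_of_card_le subset_union_left (hGcard ▸ hpure.card_le hGG')).symm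
  refine eq_of_mem_facets_of_subset hF' hFK fun x hx => ?_
  rcases eq_or_ne x v with rfl | hxv
  · exact hvF
  rcases mem_insert.1 (hG'G (mem_insert_of_mem (mem_erase.2 ⟨hxv, hx⟩))) with rfl | hxR
  · exact absurd hx hwF'
  · exact mem_of_mem_erase hxR

end

def linkVertices (K : Finset (Finset V)) (σ : Finset V) : Finset V :=
  univ.filter fun v => v ∉ σ ∧ insert v σ ∈ K

def facetsContaining (K : Finset (Finset V)) (σ : Finset V) : Finset (Finset V) :=
  (facets K).filter (σ ⊆ ·)

section

variable {K : Finset (Finset V)} {d : ℕ}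

@[simp]
theorem mem_linkVertices {σ : Finset V} {v : V} :
    v ∈ linkVertices K σ ↔ v ∉ σ ∧ insert v σ ∈ K := by
  simp [linkVertices]

@[simp]
theorem mem_facetsContaining {σ F : Finset V} :
    F ∈ facetsContaining K σ ↔ F ∈ facets K ∧ σ ⊆ F :=
  mem_filter

theorem card_facetsContaining_insert_le (hK : IsComplex K) (hpure : IsPure K d)
    (hflag : IsFlag K) (hns : NoSquare K) (hfree : NoFree K d) {σ : Finset V} {v : V}
    (hv : v ∉ σ) :
    #(facetsContaining K (insert v σ)) ≤
      #(linkVertices K σ \ insert v (linkVertices K (insert v σ))) := by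
  refine card_le_card_of_forall_subsingleton
    (fun F w => w ∉ F ∧ ({v, w} : Finset V) ∉ K ∧ insert w (F.erase v) ∈ K) ?_ ?_
  · intro F hF
    obtain ⟨hFfacet, hσvF⟩ := mem_facetsContaining.1 hF
    have hvF : v ∈ F := hσvF (mem_insert_self v σ)
    obtain ⟨w, hwF, hvw, hG⟩ := exists_second_extension hK hpure hflag hfree hFfacet hvF
    have hσR : σ ⊆ F.erase v := fun x hx =>
      mem_erase.2 ⟨fun h => hv (h ▸ hx), hσvF (mem_insert_of_mem hx)⟩
    refine ⟨w, ?_, hwF, hvw, hG⟩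
    simp only [mem_sdiff, mem_insert, mem_linkVertices, not_or, not_and]
    refine ⟨⟨fun hw => hwF (hσR.trans (erase_subset v F) hw),
      hK.mem_of_subset hG (insert_subset_insert w hσR)⟩, fun hwv => hwF (hwv ▸ hvF),
      fun _ hwvσ => hvw (hK.pair_mem hwvσ (mem_insert_of_mem (mem_insert_self v σ))
        (mem_insert_self w _))⟩
  · rintro w - F ⟨hF, hwF, hvw, hG⟩ F' ⟨hF', hwF', -, hG'⟩
    obtain ⟨hFfacet, hσvF⟩ := mem_facetsContaining.1 hF
    obtain ⟨hF'facet, hσvF'⟩ := mem_facetsContaining.1 hF'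
    exact eq_of_second_extension hK hpure hflag hns hFfacet hF'facet
      (hσvF (mem_insert_self v σ)) (hσvF' (mem_insert_self v σ)) hwF hwF' hvw hG hG'

theorem card_linkVertices_ge (hK : IsComplex K) (hpure : IsPure K d) (hflag : IsFlag K)
    (hns : NoSquare K) (hfree : NoFree K d) {σ : Finset V} {v : V}
    (hv : v ∈ linkVertices K σ) :
    1 + #(linkVertices K (insert v σ)) + #(facetsContaining K (insert v σ)) ≤
      #(linkVertices K σ) := by
  obtain ⟨hvσ, hσvK⟩ := mem_linkVertices.1 hv
  have hsub : insert v (linkVertices K (insert v σ)) ⊆ linkVertices K σ := by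
    refine insert_subset hv fun u hu => ?_
    obtain ⟨huσv, hK'⟩ := mem_linkVertices.1 hu
    exact mem_linkVertices.2 ⟨fun h => huσv (mem_insert_of_mem h),
      hK.mem_of_subset hK' (insert_subset_insert u (subset_insert v σ))⟩
  have hcard : #(insert v (linkVertices K (insert v σ))) = #(linkVertices K (insert v σ)) + 1 :=
    card_insert_of_notMem fun h => (mem_linkVertices.1 h).1 (mem_insert_self v σ)
  have := card_sdiff_add_card_eq_card hsub
  have := card_facetsContaining_insert_le hK hpure hflag hns hfree hvσ
  omega

theorem sum_card_facetsContaining_insert (hK : IsComplex K) (hpure : IsPure K d)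
    (σ : Finset V) :
    ∑ v ∈ linkVertices K σ, #(facetsContaining K (insert v σ)) =
      (d + 1 - #σ) * #(facetsContaining K σ) := by
  have hleft : ∀ v ∈ linkVertices K σ,
      (facetsContaining K σ).bipartiteAbove (· ∈ ·) v = facetsContaining K (insert v σ) := by
    intro v _
    ext F
    simp only [mem_bipartiteAbove, mem_facetsContaining, insert_subset_iff]
    tauto
  have hright : ∀ F ∈ facetsContaining K σ,
      (linkVertices K σ).bipartiteBelow (· ∈ ·) F = F \ σ := by
    intro F hF
    obtain ⟨hFfacet, hσF⟩ := mem_facetsContaining.1 hF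
    ext v
    simp only [mem_bipartiteBelow, mem_linkVertices, mem_sdiff]
    exact ⟨fun h => ⟨h.2, h.1.1⟩, fun h => ⟨⟨h.2,
      hK.mem_of_subset (mem_filter.1 hFfacet).1 (insert_subset h.1 hσF)⟩, h.1⟩⟩
  calc ∑ v ∈ linkVertices K σ, #(facetsContaining K (insert v σ))
      = ∑ v ∈ linkVertices K σ, #((facetsContaining K σ).bipartiteAbove (· ∈ ·) v) :=
        sum_congr rfl fun v hv => congrArg card (hleft v hv).symm
    _ = ∑ F ∈ facetsContaining K σ, #((linkVertices K σ).bipartiteBelow (· ∈ ·) F) :=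
        sum_card_bipartiteAbove_eq_sum_card_bipartiteBelow _
    _ = (d + 1 - #σ) * #(facetsContaining K σ) := by
        rw [mul_comm]
        refine sum_const_nat fun F hF => ?_
        obtain ⟨hFfacet, hσF⟩ := mem_facetsContaining.1 hF
        rw [hright F hF, card_sdiff_of_subset hσF, hpure F hFfacet]

theorem card_linkVertices_mul_le (hK : IsComplex K) (hpure : IsPure K d) {σ : Finset V}
    {p : ℝ} (hp : ∀ v ∈ linkVertices K σ, p ≤ #(facetsContaining K (insert v σ))) :
    #(linkVertices K σ) * p ≤ ((d + 1 - #σ : ℕ) : ℝ) * #(facetsContaining K σ) := by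
  have hsum := card_nsmul_le_sum _ _ _ hp
  rw [nsmul_eq_mul, ← Nat.cast_sum, sum_card_facetsContaining_insert hK hpure σ] at hsum
  exact_mod_cast hsum

end

/-- Lower bounds for the number of link vertices (`.1`) and of facets (`.2`) of a face with
`d + 1 - k` vertices, following `card_linkVertices_ge` and `card_linkVertices_mul_le`. -/
noncomputable def linkBounds : ℕ → ℝ × ℝ
  | 0 => (0, 1)
  | k + 1 =>
    let n := 1 + (linkBounds k).1 + (linkBounds k).2
    (n, n * (linkBounds k).2 / (k + 1))

theorem linkBounds_nonneg (k : ℕ) : 0 ≤ (linkBounds k).1 ∧ 0 ≤ (linkBounds k).2 := by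
  induction k with
  | zero => norm_num [linkBounds]
  | succ k ih =>
    obtain ⟨h1, h2⟩ := ih
    simp only [linkBounds]
    constructor <;> positivity

section

variable {K : Finset (Finset V)} {d : ℕ}

theorem linkBounds_le_card (hK : IsComplex K) (hpure : IsPure K d) (hflag : IsFlag K)
    (hns : NoSquare K) (hfree : NoFree K d) (k : ℕ) {σ : Finset V} (hσ : σ ∈ K)
    (hcard : #σ + k = d + 1) :
    (linkBounds k).1 ≤ #(linkVertices K σ) ∧ (linkBounds k).2 ≤ #(facetsContaining K σ) := by
  induction k generalizing σ with
  | zero =>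
    have hfacet : σ ∈ facets K := mem_filter.2 ⟨hσ, fun τ hτ hστ =>
      (eq_of_subset_of_card_le hστ ((hpure.card_le hτ).trans_eq (by omega))).symm⟩
    refine ⟨by simp [linkBounds], ?_⟩
    have hpos : 0 < #(facetsContaining K σ) :=
      card_pos.2 ⟨σ, mem_facetsContaining.2 ⟨hfacet, subset_rfl⟩⟩
    simp only [linkBounds]
    exact_mod_cast hpos
  | succ k ih =>
    obtain ⟨F, hF, hσF⟩ := exists_mem_facets_superset hσ
    obtain ⟨v, hvF, hvσ⟩ := exists_mem_notMem_of_card_lt_card (s := σ) (t := F)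
      (by rw [hpure F hF]; omega)
    have hv : v ∈ linkVertices K σ :=
      mem_linkVertices.2 ⟨hvσ, hK.mem_of_subset (mem_filter.1 hF).1 (insert_subset hvF hσF)⟩
    have ih' : ∀ u ∈ linkVertices K σ, (linkBounds k).1 ≤ #(linkVertices K (insert u σ)) ∧
        (linkBounds k).2 ≤ #(facetsContaining K (insert u σ)) := fun u hu =>
      ih (mem_linkVertices.1 hu).2 (by rw [card_insert_of_notMem (mem_linkVertices.1 hu).1]; omega)
    have hvert : (linkBounds (k + 1)).1 ≤ #(linkVertices K σ) := by
      have hcount : (1 + #(linkVertices K (insert v σ)) + #(facetsContaining K (insert v σ)) : ℝ)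
          ≤ #(linkVertices K σ) := by
        exact_mod_cast card_linkVertices_ge hK hpure hflag hns hfree hv
      obtain ⟨h1, h2⟩ := ih' v hv
      simp only [linkBounds]
      linarith
    refine ⟨hvert, ?_⟩
    have hmul := card_linkVertices_mul_le hK hpure fun u hu => (ih' u hu).2
    rw [show d + 1 - #σ = k + 1 by omega] at hmul
    have hnonneg := (linkBounds_nonneg k).2
    simp only [linkBounds] at hvert ⊢
    rw [div_le_iff₀ (by positivity)]
    push_cast at hmul
    nlinarith

end

theorem linkBounds_snd_ge (n : ℕ) :
    4 / 3 * (n + 4) * (25 / 12 : ℝ) ^ 2 ^ n ≤ (linkBounds (n + 3)).2 := by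
  induction n with
  | zero => norm_num [linkBounds]
  | succ n ih =>
    set E : ℝ := (25 / 12 : ℝ) ^ 2 ^ n
    have hE : 0 ≤ E := by positivity
    obtain ⟨ha, hb⟩ := linkBounds_nonneg (n + 3)
    have hsq : (25 / 12 : ℝ) ^ 2 ^ (n + 1) = E * E := by rw [pow_succ, pow_mul, sq]
    show _ ≤ (1 + (linkBounds (n + 3)).1 + (linkBounds (n + 3)).2) * (linkBounds (n + 3)).2 /
      ((n + 3 : ℕ) + 1 : ℝ)
    rw [hsq, le_div_iff₀ (by positivity)]
    push_cast
    have hsq_le : (linkBounds (n + 3)).2 * (linkBounds (n + 3)).2 ≤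
        (1 + (linkBounds (n + 3)).1 + (linkBounds (n + 3)).2) * (linkBounds (n + 3)).2 := by
      nlinarith
    nlinarith [mul_le_mul ih ih (by positivity) hb,
      mul_nonneg (mul_nonneg hE hE) (n.cast_nonneg : (0 : ℝ) ≤ n)]

theorem pow_lt_linkBounds_fst (n : ℕ) : (25 / 12 : ℝ) ^ 2 ^ n < (linkBounds (n + 4)).1 := by
  have h := linkBounds_snd_ge n
  have hE : 0 < (25 / 12 : ℝ) ^ 2 ^ n := by positivity
  have ha := (linkBounds_nonneg (n + 3)).1
  show _ < 1 + (linkBounds (n + 3)).1 + (linkBounds (n + 3)).2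
  nlinarith

theorem card_linkVertices_empty_le_fNum (K : Finset (Finset V)) :
    #(linkVertices K ∅) ≤ fNum K 0 := by
  refine card_le_card_of_injOn (fun v => {v}) (fun v hv => ?_) (singleton_injective.injOn)
  simpa [fNum] using (mem_linkVertices.1 hv).2

theorem vertices_lower_bound_general {V : Type} [DecidableEq V] [Fintype V]
    (d : ℕ) (hd : 3 ≤ d) (K : Finset (Finset V))
    (hK : IsComplex K)
    (hpure : IsPure K d) (hflag : IsFlag K) (hns : NoSquare K)
    (hfree : NoFree K d) :
    ((25 : ℝ) / 12) ^ 2 ^ (d - 3) < (fNum K 0 : ℝ) := by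
  obtain ⟨n, rfl⟩ : ∃ n, d = n + 3 := ⟨d - 3, by omega⟩
  have hlink := (linkBounds_le_card hK hpure hflag hns hfree (n + 4) hK.1 (by simp)).1
  have hfNum : (#(linkVertices K ∅) : ℝ) ≤ fNum K 0 := by
    exact_mod_cast card_linkVertices_empty_le_fNum K
  rw [Nat.add_sub_cancel]
  linarith [pow_lt_linkBounds_fst n]

/-- A pure `d`-dimensional (`d ≥ 3`) flag-no-square simplicial complex with no
free `(d-1)`-faces has more than `(25/12) ^ (2 ^ (d-3))` vertices. -/
theorem vertices_lower_bound {V : Type} [DecidableEq V] [Fintype V]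
    (d : ℕ) (hd : 3 ≤ d) (K : Finset (Finset V))
    (hK : IsComplex K) (hvert : ∀ v : V, ({v} : Finset V) ∈ K)
    (hpure : IsPure K d) (hflag : IsFlag K) (hns : NoSquare K)
    (hfree : NoFree K d) :
    ((25 : ℝ) / 12) ^ 2 ^ (d - 3) < (fNum K 0 : ℝ) :=
  vertices_lower_bound_general d hd K hK hpure hflag hns hfree
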